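/- arXiv:0911.4644 — 2 statements merged into one kernel-verified Lean document; each statement's English description precedes it below -/
import Mathlib

section
/- Let k be a field, f and g forms of degree d over k in n+1 variables, and L/k a finite field extension such that the variety X: f = g = 0 in ℙⁿ has an L-point. Then the hypersurface f + t·g = 0 in ℙⁿ over K = k(t) has an L(t)-point. Consequently I(W/K) divides I(X/k). -/
universe u

noncomputable section

/-- The projective variety cut out by the set `S` of forms has a nontrivial point over the
field extension `L` of `k`. -/
def ProjHasPointOver (k : Type u) [Field k] (L : Type u) [Field L] [Algebra k L] {N : ℕ}
    (S : Set (MvPolynomial (Fin N) k)) : Prop :=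
  ∃ x : Fin N → L, x ≠ 0 ∧
    ∀ f ∈ S, MvPolynomial.eval x (MvPolynomial.map (algebraMap k L) f) = 0

/-- The set of degrees `[L:k]` of finite field extensions `L/k` over which the projective
variety cut out by `S` acquires a point. -/
def projDegrees (k : Type u) [Field k] {N : ℕ} (S : Set (MvPolynomial (Fin N) k)) : Set ℕ :=
  {m | ∃ (L : Type u) (_ : Field L) (_ : Algebra k L), FiniteDimensional k L ∧
        Module.finrank k L = m ∧ ProjHasPointOver k L S}

/-- `IsGcdOf S g` expresses that `g` is the greatest common divisor of the set `S ⊆ ℕ`. -/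
def IsGcdOf (S : Set ℕ) (g : ℕ) : Prop :=
  (∀ m ∈ S, g ∣ m) ∧ ∀ J : ℕ, (∀ m ∈ S, J ∣ m) → J ∣ g

/-- The index of the projective variety cut out by `S` over `k`: the gcd of the degrees of the
closed points, i.e. the gcd of the degrees of the finite extensions over which it has a point. -/
def projIndex (k : Type u) [Field k] {N : ℕ} (S : Set (MvPolynomial (Fin N) k)) : ℕ :=
  sInf {g | IsGcdOf (projDegrees k S) g}

/-- The projective variety cut out by `S` possesses a zero-cycle of degree 1 over `k`. -/
def HasZeroCycleDegOne (k : Type u) [Field k] {N : ℕ}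
    (S : Set (MvPolynomial (Fin N) k)) : Prop :=
  ∃ (m : ℕ) (dg : Fin m → ℕ) (c : Fin m → ℤ),
    (∀ i, dg i ∈ projDegrees k S) ∧ ∑ i, c i * (dg i : ℤ) = 1

/-- The reduced index: the product of the distinct primes dividing the index. -/
def Nat.radicalOf (I : ℕ) : ℕ := I.primeFactors.prod id

/-- The natural inclusion `k(t) → L(t)` induced by a field extension `L/k`. -/
def ratFuncMap (k L : Type u) [Field k] [Field L] [Algebra k L] : RatFunc k →+* RatFunc L :=
  RatFunc.mapRingHom (Polynomial.mapRingHom (algebraMap k L)) (by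
    intro p hp
    simp only [Submonoid.mem_comap, Polynomial.coe_mapRingHom] at *
    rw [mem_nonZeroDivisors_iff_ne_zero] at hp ⊢
    simpa [Polynomial.map_ne_zero_iff ((algebraMap k L).injective)] using hp)

/-! An `L`-point of `f = g = 0`, read in `L(t)`, is a zero of `f + t·g`. Since
`[L(t) : k(t)] = [L : k]`, every degree of a finite extension over which `X` has a point is also
one for `W`, so the gcd of the latter set divides the gcd of the former. -/

open MvPolynomial

section RatFuncMap

variable (k L : Type u) [Field k] [Field L] [Algebra k L]

lemma ratFuncMap_algebraMap (p : Polynomial k) :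
    ratFuncMap k L (algebraMap (Polynomial k) (RatFunc k) p) =
      algebraMap (Polynomial L) (RatFunc L) (p.map (algebraMap k L)) := by
  rw [ratFuncMap, RatFunc.coe_mapRingHom_eq_coe_map, ← div_one (algebraMap _ _ p),
    ← map_one (algebraMap (Polynomial k) (RatFunc k)), RatFunc.map_apply_div]
  simp

lemma ratFuncMap_comp_algebraMap :
    (ratFuncMap k L).comp (algebraMap k (RatFunc k)) =
      (algebraMap L (RatFunc L)).comp (algebraMap k L) := by
  ext c
  simp only [RingHom.comp_apply, RatFunc.algebraMap_eq_C]
  rw [← RatFunc.algebraMap_C, ratFuncMap_algebraMap, Polynomial.map_C, RatFunc.algebraMap_C]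

attribute [local instance] Polynomial.algebra in
lemma liftAlgebra_eq_ratFuncMap_toAlgebra :
    RatFunc.liftAlgebra k (RatFunc L) = (ratFuncMap k L).toAlgebra := by
  refine Algebra.algebra_ext _ _ (RingHom.ext_iff.mp ?_)
  refine IsLocalization.ringHom_ext (nonZeroDivisors (Polynomial k)) (RingHom.ext fun p => ?_)
  simp only [RingHom.comp_apply, RingHom.algebraMap_toAlgebra, ratFuncMap_algebraMap]
  exact IsFractionRing.lift_algebraMap _ p

lemma finrank_ratFuncMap [FiniteDimensional k L] :
    letI := (ratFuncMap k L).toAlgebra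
    Module.finrank (RatFunc k) (RatFunc L) = Module.finrank k L := by
  rw [← liftAlgebra_eq_ratFuncMap_toAlgebra]
  exact RatFunc.finrank_ratFunc_ratFunc k L

lemma eval_map_ratFuncMap {N : ℕ} (F : MvPolynomial (Fin N) k) (x : Fin N → L) :
    eval (algebraMap L (RatFunc L) ∘ x) (map (ratFuncMap k L) (map (algebraMap k (RatFunc k)) F)) =
      algebraMap L (RatFunc L) (eval x (map (algebraMap k L) F)) := by
  rw [map_map, ratFuncMap_comp_algebraMap, eval_map, eval_map, eval₂_comp_left]

end RatFuncMap

lemma ProjHasPointOver.ratFunc_pencil {k L : Type u} [Field k] [Field L] [Algebra k L] {N : ℕ}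
    {f g : MvPolynomial (Fin N) k} (hpt : ProjHasPointOver k L {f, g}) :
    @ProjHasPointOver (RatFunc k) _ (RatFunc L) _ ((ratFuncMap k L).toAlgebra) _
      ({map (algebraMap k (RatFunc k)) f + C RatFunc.X * map (algebraMap k (RatFunc k)) g} :
        Set (MvPolynomial (Fin N) (RatFunc k))) := by
  let := (ratFuncMap k L).toAlgebra
  obtain ⟨x, hx0, hx⟩ := hpt
  refine ⟨algebraMap L (RatFunc L) ∘ x, fun h => hx0 ?_, ?_⟩
  · exact funext fun i => (map_eq_zero _).mp (congrFun h i)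
  · rintro _ rfl
    have hf := hx f (Set.mem_insert f {g})
    have hg := hx g (Set.mem_insert_of_mem f rfl)
    rw [map_add, map_mul, map_C, eval_add, eval_mul, eval_C, RingHom.algebraMap_toAlgebra,
      eval_map_ratFuncMap, eval_map_ratFuncMap, hf, hg]
    simp

lemma projDegrees_subset_ratFunc_pencil (k : Type u) [Field k] {N : ℕ}
    (f g : MvPolynomial (Fin N) k) :
    projDegrees k {f, g} ⊆ projDegrees (RatFunc k)
      {map (algebraMap k (RatFunc k)) f + C RatFunc.X * map (algebraMap k (RatFunc k)) g} := by
  rintro _ ⟨L, _, _, _, rfl, hpt⟩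
  let := (ratFuncMap k L).toAlgebra
  have hrank := finrank_ratFuncMap k L
  refine ⟨RatFunc L, inferInstance, _, Module.finite_of_finrank_pos ?_, hrank, hpt.ratFunc_pencil⟩
  rw [hrank]
  exact Module.finrank_pos

lemma exists_isGcdOf (D : Set ℕ) : ∃ G, IsGcdOf D G := by
  obtain ⟨z, hz⟩ := (IsPrincipalIdealRing.principal (Ideal.span ((↑) '' D : Set ℤ))).principal
  have hspan : Ideal.span ((↑) '' D : Set ℤ) = Ideal.span {z} := hz
  refine ⟨z.natAbs, fun m hm => ?_, fun J hJ => ?_⟩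
  · have : (m : ℤ) ∈ Ideal.span {z} := hspan ▸ Ideal.subset_span ⟨m, hm, rfl⟩
    exact Int.natAbs_dvd_natAbs.mpr (Ideal.mem_span_singleton.mp this)
  · have hle : Ideal.span ((↑) '' D : Set ℤ) ≤ Ideal.span {(J : ℤ)} := Ideal.span_le.mpr <| by
      rintro _ ⟨m, hm, rfl⟩
      exact Ideal.mem_span_singleton.mpr (Int.natCast_dvd_natCast.mpr (hJ m hm))
    have : z ∈ Ideal.span {(J : ℤ)} := hle (hspan ▸ Ideal.mem_span_singleton_self z)
    exact Int.natCast_dvd.mp (Ideal.mem_span_singleton.mp this)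

lemma IsGcdOf.dvd_of_subset {A B : Set ℕ} {a b : ℕ} (ha : IsGcdOf A a) (hb : IsGcdOf B b)
    (hAB : A ⊆ B) : b ∣ a :=
  ha.2 b fun m hm => hb.1 m (hAB hm)

lemma isGcdOf_projIndex (k : Type u) [Field k] {N : ℕ} (S : Set (MvPolynomial (Fin N) k)) :
    IsGcdOf (projDegrees k S) (projIndex k S) := by
  obtain ⟨G, hG⟩ := exists_isGcdOf (projDegrees k S)
  have hunique : {g | IsGcdOf (projDegrees k S) g} = {G} :=
    Set.eq_singleton_iff_unique_mem.mpr
      ⟨hG, fun g hg => Nat.dvd_antisymm (hG.dvd_of_subset hg le_rfl) (hg.dvd_of_subset hG le_rfl)⟩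
  rw [projIndex, hunique, csInf_singleton]
  exact hG

theorem point_over_Lt_and_index_dvd_general (k L : Type u) [Field k] [Field L] [Algebra k L]
    (n : ℕ)
    (f g : MvPolynomial (Fin (n + 1)) k)
    (hpt : ProjHasPointOver k L ({f, g} : Set (MvPolynomial (Fin (n + 1)) k))) :
    (@ProjHasPointOver (RatFunc k) _ (RatFunc L) _ ((ratFuncMap k L).toAlgebra) _
        ({MvPolynomial.map (algebraMap k (RatFunc k)) f +
          MvPolynomial.C RatFunc.X * MvPolynomial.map (algebraMap k (RatFunc k)) g} :
          Set (MvPolynomial (Fin (n + 1)) (RatFunc k)))) ∧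
      projIndex (RatFunc k)
        ({MvPolynomial.map (algebraMap k (RatFunc k)) f +
          MvPolynomial.C RatFunc.X * MvPolynomial.map (algebraMap k (RatFunc k)) g} :
          Set (MvPolynomial (Fin (n + 1)) (RatFunc k))) ∣
        projIndex k ({f, g} : Set (MvPolynomial (Fin (n + 1)) k)) :=
  ⟨hpt.ratFunc_pencil, (isGcdOf_projIndex _ _).dvd_of_subset (isGcdOf_projIndex _ _)
    (projDegrees_subset_ratFunc_pencil k f g)⟩

/-- If the variety `X : f = g = 0` in `ℙⁿ_k` has an `L`-point for a finite extension `L/k`,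
then the hypersurface `W : f + t·g = 0` over `K = k(t)` has an `L(t)`-point; consequently
`I(W/K)` divides `I(X/k)`. -/
theorem point_over_Lt_and_index_dvd (k L : Type u) [Field k] [Field L] [Algebra k L]
    [FiniteDimensional k L] (n d : ℕ)
    (f g : MvPolynomial (Fin (n + 1)) k)
    (hf : f.IsHomogeneous d) (hg : g.IsHomogeneous d)
    (hpt : ProjHasPointOver k L ({f, g} : Set (MvPolynomial (Fin (n + 1)) k))) :
    (@ProjHasPointOver (RatFunc k) _ (RatFunc L) _ ((ratFuncMap k L).toAlgebra) _
        ({MvPolynomial.map (algebraMap k (RatFunc k)) f +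
          MvPolynomial.C RatFunc.X * MvPolynomial.map (algebraMap k (RatFunc k)) g} :
          Set (MvPolynomial (Fin (n + 1)) (RatFunc k)))) ∧
      projIndex (RatFunc k)
        ({MvPolynomial.map (algebraMap k (RatFunc k)) f +
          MvPolynomial.C RatFunc.X * MvPolynomial.map (algebraMap k (RatFunc k)) g} :
          Set (MvPolynomial (Fin (n + 1)) (RatFunc k))) ∣
        projIndex k ({f, g} : Set (MvPolynomial (Fin (n + 1)) k)) :=
  point_over_Lt_and_index_dvd_general k L n f g hpt
end
end

section
/- Let k be a field of characteristic ≠ 2 and q a quadratic form over the rational function field k(t₁, t₂) in n+1 ≥ 2 variables. If the projective quadric q = 0 has a zero-cycle of degree 1 over k(t₁,t₂), then it has a k(t₁,t₂)-rational point. -/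
universe u

noncomputable section

/-- The rational function field `k(t₁,…,t_r)`. -/
abbrev RatFuncField (k : Type u) [Field k] (r : ℕ) : Type u :=
  FractionRing (MvPolynomial (Fin r) k)

noncomputable instance (k : Type u) [Field k] (r : ℕ) : Algebra k (RatFuncField k r) :=
  ((algebraMap (MvPolynomial (Fin r) k) (RatFuncField k r)).comp
    (algebraMap k (MvPolynomial (Fin r) k))).toAlgebra

/-- The transcendental element `tᵢ` of `k(t₁,…,t_r)`. -/
noncomputable def tVar (k : Type u) [Field k] {r : ℕ} (i : Fin r) : RatFuncField k r :=
  algebraMap (MvPolynomial (Fin r) k) (RatFuncField k r) (MvPolynomial.X i)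

/-!
A zero-cycle of degree 1 has a closed point of odd degree, so this is Springer's theorem: a
quadratic form that is anisotropic over `F` stays anisotropic over every finite extension of odd
degree. Adjoining one element at a time reduces this to `L = F[X]/(f)` with `f` irreducible of odd
degree, where we induct on `deg f`. An isotropic vector over `F[X]/(f)` lifts to a primitive vector
`g` of polynomials of degree `< deg f` with `f ∣ q(g)`. Anisotropy over `F` makes the top
coefficient of `q(g)` nonzero, so `deg q(g) = 2 max deg gᵢ`. Hence `q(g) = f h` with `deg h` odd
and `< deg f`, and an odd-degree irreducible factor `r` of `h` yields an isotropic vector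
`g mod r` over `F[X]/(r)`.
-/

open Polynomial

namespace Polynomial

theorem coeff_prod_sum_of_natDegree_le {R ι : Type*} [CommSemiring R] (s : Finset ι)
    (p : ι → R[X]) (e : ι → ℕ) (h : ∀ i ∈ s, (p i).natDegree ≤ e i) :
    (∏ i ∈ s, p i).coeff (∑ i ∈ s, e i) = ∏ i ∈ s, (p i).coeff (e i) := by
  induction s using Finset.cons_induction with
  | empty => simp
  | cons a s ha ih =>
    rw [Finset.prod_cons, Finset.sum_cons, Finset.prod_cons,
      coeff_mul_add_eq_of_natDegree_le (h a (s.mem_cons_self a))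
        ((natDegree_prod_le _ _).trans (Finset.sum_le_sum fun i hi => h i (s.mem_cons_of_mem hi))),
      ih fun i hi => h i (s.mem_cons_of_mem hi)]

theorem exists_irreducible_dvd_of_odd_natDegree {K : Type*} [Field K] {h : K[X]} (h0 : h ≠ 0)
    (hodd : Odd h.natDegree) : ∃ r, Irreducible r ∧ r ∣ h ∧ Odd r.natDegree := by
  induction h using WfDvdMonoid.induction_on_irreducible with
  | zero => exact absurd rfl h0
  | unit u hu => simp [natDegree_eq_zero_of_isUnit hu] at hodd
  | mul a i ha hi ih =>
    rw [natDegree_mul hi.ne_zero ha, Nat.odd_add'] at hodd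
    by_cases hia : Odd i.natDegree
    · exact ⟨i, hi, dvd_mul_right i a, hia⟩
    · obtain ⟨r, hr, hra, hodd⟩ := ih ha (hodd.mpr (Nat.not_odd_iff_even.mp hia))
      exact ⟨r, hr, hra.mul_left i, hodd⟩

end Polynomial

namespace MvPolynomial.IsHomogeneous

variable {ι R : Type*} [CommSemiring R] {φ : MvPolynomial ι R} {n : ℕ}

theorem sum_eq_of_mem_support (hφ : φ.IsHomogeneous n) {d : ι →₀ ℕ} (hd : d ∈ φ.support) :
    ∑ i ∈ d.support, d i = n := by
  simpa [Finsupp.weight_apply, Finsupp.sum] using hφ (mem_support_iff.mp hd)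

theorem eval_smul (hφ : φ.IsHomogeneous n) (c : R) (x : ι → R) :
    eval (c • x) φ = c ^ n * eval x φ := by
  rw [eval_eq, eval_eq, Finset.mul_sum]
  refine Finset.sum_congr rfl fun d hd => ?_
  simp_rw [Pi.smul_apply, smul_eq_mul, mul_pow, Finset.prod_mul_distrib,
    Finset.prod_pow_eq_pow_sum, hφ.sum_eq_of_mem_support hd]
  ring

variable {g : ι → R[X]} {m : ℕ}

theorem natDegree_eval₂_C_le (hφ : φ.IsHomogeneous n) (hg : ∀ i, (g i).natDegree ≤ m) :
    (MvPolynomial.eval₂ Polynomial.C g φ).natDegree ≤ n * m := by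
  rw [eval₂_eq]
  refine natDegree_sum_le_of_forall_le _ _ fun d hd => (natDegree_C_mul_le _ _).trans <|
    (natDegree_prod_le _ _).trans ?_
  calc ∑ i ∈ d.support, (g i ^ d i).natDegree
      ≤ ∑ i ∈ d.support, d i * m := Finset.sum_le_sum fun i _ => natDegree_pow_le_of_le _ (hg i)
    _ = n * m := by rw [← Finset.sum_mul, hφ.sum_eq_of_mem_support hd]

theorem coeff_eval₂_C (hφ : φ.IsHomogeneous n) (hg : ∀ i, (g i).natDegree ≤ m) :
    (MvPolynomial.eval₂ Polynomial.C g φ).coeff (n * m) = eval (fun i => (g i).coeff m) φ := by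
  rw [eval₂_eq, Polynomial.finsetSum_coeff, eval_eq]
  refine Finset.sum_congr rfl fun d hd => ?_
  rw [Polynomial.coeff_C_mul, ← hφ.sum_eq_of_mem_support hd, Finset.sum_mul,
    coeff_prod_sum_of_natDegree_le _ _ _ fun i _ => natDegree_pow_le_of_le _ (hg i)]
  simp_rw [coeff_pow_of_natDegree_le (hg _)]

end MvPolynomial.IsHomogeneous

theorem MvPolynomial.IsHomogeneous.exists_natDegree_eval₂_C_eq {K ι : Type*} [Field K]
    [Fintype ι] {φ : MvPolynomial ι K} {n : ℕ} (hφ : φ.IsHomogeneous n)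
    (haniso : ∀ v, MvPolynomial.eval v φ = 0 → v = 0) {g : ι → K[X]} (hg : g ≠ 0) :
    ∃ j, MvPolynomial.eval₂ Polynomial.C g φ ≠ 0 ∧
      (MvPolynomial.eval₂ Polynomial.C g φ).natDegree = n * (g j).natDegree := by
  classical
  obtain ⟨j, hj, hmax⟩ := Finset.exists_max_image (Finset.univ.filter (g · ≠ 0))
    (fun i => (g i).natDegree) (by simpa [Finset.filter_nonempty_iff] using Function.ne_iff.mp hg)
  have hle : ∀ i, (g i).natDegree ≤ (g j).natDegree := fun i => by
    by_cases hi : g i = 0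
    · simp [hi]
    · exact hmax i (by simpa using hi)
  have hcoeff : (MvPolynomial.eval₂ Polynomial.C g φ).coeff (n * (g j).natDegree) ≠ 0 := by
    rw [hφ.coeff_eval₂_C hle]
    refine fun h => (Finset.mem_filter.mp hj).2 ?_
    simpa using congrFun (haniso _ h) j
  exact ⟨j, fun h => hcoeff (by simp [h]),
    (hφ.natDegree_eval₂_C_le hle).antisymm (le_natDegree_of_ne_zero hcoeff)⟩

section ProjHasPointOver

variable {k : Type u} [Field k] {N : ℕ} {q : MvPolynomial (Fin N) k}

theorem projHasPointOver_singleton_iff {L : Type u} [Field L] [Algebra k L] :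
    ProjHasPointOver k L {q} ↔
      ∃ x : Fin N → L, x ≠ 0 ∧ MvPolynomial.eval x (MvPolynomial.map (algebraMap k L) q) = 0 := by
  simp [ProjHasPointOver]

theorem not_projHasPointOver_self_iff :
    ¬ProjHasPointOver k k {q} ↔ ∀ v : Fin N → k, MvPolynomial.eval v q = 0 → v = 0 := by
  simp [projHasPointOver_singleton_iff, not_imp_not]

theorem ProjHasPointOver.of_algHom {K L : Type u} [Field K] [Field L] [Algebra k K] [Algebra k L]
    {S : Set (MvPolynomial (Fin N) k)} (φ : K →ₐ[k] L) (h : ProjHasPointOver k K S) :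
    ProjHasPointOver k L S := by
  obtain ⟨x, hx, hS⟩ := h
  refine ⟨φ ∘ x, fun h0 => hx (funext fun i => φ.injective (by simpa using congrFun h0 i)),
    fun f hf => ?_⟩
  have := congrArg (φ : K →+* L) (hS f hf)
  rwa [MvPolynomial.eval_map, MvPolynomial.eval₂_comp_left, map_zero, φ.comp_algebraMap,
    ← MvPolynomial.eval_map] at this

theorem projHasPointOver_map_iff {K L : Type u} [Field K] [Field L] [Algebra k K] [Algebra k L]
    [Algebra K L] [IsScalarTower k K L] :
    ProjHasPointOver K L {MvPolynomial.map (algebraMap k K) q} ↔ ProjHasPointOver k L {q} := by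
  simp only [projHasPointOver_singleton_iff, MvPolynomial.map_map,
    ← IsScalarTower.algebraMap_eq]

end ProjHasPointOver

namespace AdjoinRoot

theorem eval_map_algebraMap_mk {R σ : Type*} [CommRing R] {f : R[X]} (g : σ → R[X])
    (q : MvPolynomial σ R) :
    MvPolynomial.eval (fun i => mk f (g i)) (MvPolynomial.map (algebraMap R (AdjoinRoot f)) q) =
      mk f (MvPolynomial.eval₂ C g q) := by
  rw [MvPolynomial.eval_map, MvPolynomial.eval₂_comp_left, algebraMap_eq]
  rfl

variable {F : Type u} [Field F] {f : F[X]}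

theorem exists_natDegree_lt_mk_eq (hf : f.natDegree ≠ 0) (x : AdjoinRoot f) :
    ∃ g : F[X], g.natDegree < f.natDegree ∧ mk f g = x := by
  obtain ⟨g, rfl⟩ := mk_surjective x
  refine ⟨g % f, natDegree_mod_lt g hf, ?_⟩
  conv_rhs => rw [← EuclideanDomain.mod_add_div g f]
  rw [map_add, map_mul, mk_self, zero_mul, add_zero]

variable [Fact (Irreducible f)] {N : ℕ} {q : MvPolynomial (Fin N) F}

theorem exists_primitive_lift_of_projHasPointOver (hq : q.IsHomogeneous 2)
    (h : ProjHasPointOver F (AdjoinRoot f) {q}) :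
    ∃ g : Fin N → F[X], (∀ i, (g i).natDegree < f.natDegree) ∧
      (∀ r, (∀ i, r ∣ g i) → IsUnit r) ∧ f ∣ MvPolynomial.eval₂ C g q := by
  classical
  obtain ⟨x, hx0, hx⟩ := projHasPointOver_singleton_iff.mp h
  obtain ⟨j, hj⟩ := Function.ne_iff.mp hx0
  have hf : f.natDegree ≠ 0 := (Fact.out : Irreducible f).natDegree_pos.ne'
  choose g₁ hg₁deg hg₁ using fun i => exists_natDegree_lt_mk_eq hf (x i)
  obtain ⟨g, hg₁g, hg⟩ := Finset.extract_gcd g₁ ⟨j, Finset.mem_univ j⟩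
  set G := Finset.univ.gcd g₁
  have hxG : x = mk f G • fun i => mk f (g i) :=
    funext fun i => by simp [← hg₁ i, hg₁g i]
  have hG : mk f G ≠ 0 := fun h => hj (by simp [hxG, h])
  have hG0 : G ≠ 0 := fun h => hG (by rw [h, map_zero])
  refine ⟨g, fun i => ?_, fun r hr => ?_, ?_⟩
  · rcases eq_or_ne (g i) 0 with h0 | h0
    · rw [h0, natDegree_zero]
      exact Nat.pos_of_ne_zero hf
    · have := hg₁deg i
      rw [hg₁g i (Finset.mem_univ i), natDegree_mul hG0 h0] at this
      omega
  · exact isUnit_of_dvd_one (hg ▸ Finset.dvd_gcd fun i _ => hr i)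
  · have hscale := (hq.map (algebraMap F (AdjoinRoot f))).eval_smul (mk f G) fun i => mk f (g i)
    rw [← hxG, hx, eval_map_algebraMap_mk] at hscale
    exact mk_eq_zero.mp ((mul_eq_zero.mp hscale.symm).resolve_left (pow_ne_zero 2 hG))

theorem exists_odd_natDegree_lt_projHasPointOver (hf : Odd f.natDegree)
    (hq : q.IsHomogeneous 2) (haniso : ¬ProjHasPointOver F F {q})
    (h : ProjHasPointOver F (AdjoinRoot f) {q}) :
    ∃ (r : F[X]) (_ : Fact (Irreducible r)), Odd r.natDegree ∧ r.natDegree < f.natDegree ∧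
      ProjHasPointOver F (AdjoinRoot r) {q} := by
  obtain ⟨g, hdeg, hprim, c, hfc⟩ := exists_primitive_lift_of_projHasPointOver hq h
  have hg : g ≠ 0 := fun h0 => not_isUnit_X (hprim X fun i => by simp [h0])
  obtain ⟨j, hP0, hPdeg⟩ :=
    hq.exists_natDegree_eval₂_C_eq (not_projHasPointOver_self_iff.mp haniso) hg
  have hc0 : c ≠ 0 := by rintro rfl; exact hP0 (by rw [hfc, mul_zero])
  have hfc_deg : f.natDegree + c.natDegree = 2 * (g j).natDegree := by
    rw [← hPdeg, hfc, natDegree_mul (Fact.out : Irreducible f).ne_zero hc0]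
  have hj := hdeg j
  obtain ⟨r, hr, hrc, hrodd⟩ :=
    exists_irreducible_dvd_of_odd_natDegree hc0 (by rw [Nat.odd_iff] at hf ⊢; omega)
  have hrdeg := natDegree_le_of_dvd hrc hc0
  have : Fact (Irreducible r) := ⟨hr⟩
  refine ⟨r, this, hrodd, by omega, projHasPointOver_singleton_iff.mpr
    ⟨fun i => mk r (g i), fun h0 => hr.not_isUnit (hprim r fun i => ?_), ?_⟩⟩
  · exact mk_eq_zero.mp (congrFun h0 i)
  · rw [eval_map_algebraMap_mk, mk_eq_zero, hfc]
    exact hrc.mul_left f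

end AdjoinRoot

section Springer

variable {F : Type u} [Field F] {N : ℕ} {q : MvPolynomial (Fin N) F}

theorem ProjHasPointOver.of_adjoinRoot {f : F[X]} [Fact (Irreducible f)] (hf : Odd f.natDegree)
    (hq : q.IsHomogeneous 2) (h : ProjHasPointOver F (AdjoinRoot f) {q}) :
    ProjHasPointOver F F {q} := by
  induction hd : f.natDegree using Nat.strong_induction_on generalizing f with
  | _ d ih =>
  by_contra haniso
  obtain ⟨r, _, hr, hlt, hr'⟩ :=
    AdjoinRoot.exists_odd_natDegree_lt_projHasPointOver hf hq haniso h
  exact haniso (ih _ (hd ▸ hlt) hr hr' rfl)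

theorem ProjHasPointOver.of_odd_finrank {L : Type u} [Field L] [Algebra F L]
    [FiniteDimensional F L] (hodd : Odd (Module.finrank F L)) (hq : q.IsHomogeneous 2)
    (h : ProjHasPointOver F L {q}) : ProjHasPointOver F F {q} := by
  induction hd : Module.finrank F L using Nat.strong_induction_on generalizing F with
  | _ d ih =>
  by_cases hbot : (⊥ : IntermediateField F L) = ⊤
  · exact h.of_algHom (IntermediateField.topEquiv.symm.trans
      ((IntermediateField.equivOfEq hbot.symm).trans (IntermediateField.botEquiv F L)) : L →ₐ[F] F)
  obtain ⟨α, hα⟩ : ∃ α : L, α ∉ (⊥ : IntermediateField F L) := by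
    by_contra! hall
    exact hbot (eq_top_iff.mpr fun x _ => hall x)
  set K := IntermediateField.adjoin F {α}
  have hint : IsIntegral F α := .of_finite F α
  have hK : Module.finrank F K = (minpoly F α).natDegree := IntermediateField.adjoin.finrank hint
  have hK1 : Module.finrank F K ≠ 1 := by
    rwa [Ne, IntermediateField.finrank_eq_one_iff, IntermediateField.adjoin_simple_eq_bot_iff]
  have htower := Module.finrank_mul_finrank F K L
  rw [← htower] at hodd
  have hKL : Module.finrank K L < d := by
    rw [← hd, ← htower]
    have : 0 < Module.finrank F K := Module.finrank_pos
    exact lt_mul_left Module.finrank_pos (by omega)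
  have hFK : ProjHasPointOver F K {q} := projHasPointOver_map_iff.mp <|
    ih _ hKL (Nat.odd_mul.mp hodd).2 (hq.map _) (projHasPointOver_map_iff.mpr h) rfl
  have : Fact (Irreducible (minpoly F α)) := ⟨minpoly.irreducible hint⟩
  exact (hFK.of_algHom (IntermediateField.adjoinRootEquivAdjoin F hint).symm).of_adjoinRoot
    (hK ▸ (Nat.odd_mul.mp hodd).1) hq

end Springer

theorem HasZeroCycleDegOne.exists_odd_mem_projDegrees {k : Type u} [Field k] {N : ℕ}
    {S : Set (MvPolynomial (Fin N) k)} (h : HasZeroCycleDegOne k S) :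
    ∃ d ∈ projDegrees k S, Odd d := by
  obtain ⟨m, dg, c, hdg, hsum⟩ := h
  by_contra! heven
  have h2 : (2 : ℤ) ∣ ∑ i, c i * dg i := Finset.dvd_sum fun i _ => Dvd.dvd.mul_left
    (by exact_mod_cast (Nat.not_odd_iff_even.mp (heven _ (hdg i))).two_dvd) _
  rw [hsum] at h2
  norm_num at h2

theorem springer_quadric_over_ratFunc_general (k : Type u) [Field k]
    (n : ℕ)
    (q : MvPolynomial (Fin (n + 1)) (RatFuncField k 2))
    (hq : q.IsHomogeneous 2)
    (hcycle : HasZeroCycleDegOne (RatFuncField k 2)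
      ({q} : Set (MvPolynomial (Fin (n + 1)) (RatFuncField k 2)))) :
    ProjHasPointOver (RatFuncField k 2) (RatFuncField k 2)
      ({q} : Set (MvPolynomial (Fin (n + 1)) (RatFuncField k 2))) := by
  obtain ⟨d, ⟨L, _, _, _, rfl, hL⟩, hodd⟩ := hcycle.exists_odd_mem_projDegrees
  exact hL.of_odd_finrank hodd hq

/-- **Springer's theorem over `k(t₁,t₂)`.**  Let `k` be a field of characteristic `≠ 2` and `q`
a quadratic form in `n+1 ≥ 2` variables over `F = k(t₁,t₂)`.  If the projective quadric
`q = 0` has a zero-cycle of degree 1 over `F`, then it has an `F`-rational point. -/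
theorem springer_quadric_over_ratFunc (k : Type u) [Field k] (hchar : ringChar k ≠ 2)
    (n : ℕ) (hn : 2 ≤ n + 1)
    (q : MvPolynomial (Fin (n + 1)) (RatFuncField k 2))
    (hq : q.IsHomogeneous 2)
    (hcycle : HasZeroCycleDegOne (RatFuncField k 2)
      ({q} : Set (MvPolynomial (Fin (n + 1)) (RatFuncField k 2)))) :
    ProjHasPointOver (RatFuncField k 2) (RatFuncField k 2)
      ({q} : Set (MvPolynomial (Fin (n + 1)) (RatFuncField k 2))) :=
  springer_quadric_over_ratFunc_general k n q hq hcycle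
end
end
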